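/- Let n, m ≥ 1 and let k, l be natural numbers with k ≤ m, l ≤ m and k + l ≥ 1. Let φ be a tempered distribution on ℝⁿ such that for every ε > 0 there exists C(ε) ≥ 0 with |φ(u·conj v)| ≤ ε‖u‖_k‖v‖_l + C(ε)‖u‖₀‖v‖₀ for all Schwartz functions u, v : ℝⁿ → ℂ. Then for every pair of multi-indices β, α with |β| = m−k and |α| = m−l and for every ε > 0 there exists C′(ε) ≥ 0 such that |φ(D^β f · conj(D^α f))| ≤ ε‖f‖_m² + C′(ε)‖f‖₀² for all Schwartz functions f. (The form (φ D^{m−k}f, D^{m−l}f) is subordinate to the form (∇^m f, ∇^m f) with arbitrarily small relative bound.) -/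

import Mathlib

open MeasureTheory SchwartzMap Real Complex
open scoped FourierTransform RealInnerProductSpace

noncomputable section Preamble

variable {E : Type*} [NormedAddCommGroup E] [NormedSpace ℝ E]

/-- A Schwartz function has temperate growth. -/
lemma schwartz_hasTemperateGrowth (f : 𝓢(E, ℂ)) : Function.HasTemperateGrowth ⇑f := by
  refine ⟨f.smooth', fun n => ⟨0, ?_⟩⟩
  obtain ⟨C, hC⟩ := f.decay' 0 n
  exact ⟨C, fun x => by
    have hx := hC x
    rw [pow_zero, one_mul] at hx
    rw [pow_zero, mul_one]
    exact hx⟩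

/-- The pointwise product of two Schwartz functions, as a Schwartz function. -/
def smul2 (f g : 𝓢(E, ℂ)) : 𝓢(E, ℂ) :=
  SchwartzMap.bilinLeftCLM (ContinuousLinearMap.mul ℝ ℂ)
    (schwartz_hasTemperateGrowth g) f

lemma smul2_apply (f g : 𝓢(E, ℂ)) (x : E) : smul2 f g x = f x * g x := rfl

/-- The pointwise complex conjugate of a Schwartz function, as a Schwartz function. -/
def conjS (f : 𝓢(E, ℂ)) : 𝓢(E, ℂ) where
  toFun := fun x => starRingEnd ℂ (f x)
  smooth' := Complex.conjLIE.toContinuousLinearEquiv.toContinuousLinearMap.contDiff.comp f.smooth'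
  decay' := by
    intro k n
    obtain ⟨C, hC⟩ := f.decay' k n
    refine ⟨C, fun x => ?_⟩
    have h := Complex.conjLIE.norm_iteratedFDeriv_comp_left (⇑f) x n
    calc ‖x‖ ^ k * ‖iteratedFDeriv ℝ n (fun y => starRingEnd ℂ (f y)) x‖
        = ‖x‖ ^ k * ‖iteratedFDeriv ℝ n (⇑f) x‖ := by rw [← h]; rfl
      _ ≤ C := hC x

lemma conjS_apply (f : 𝓢(E, ℂ)) (x : E) : conjS f x = starRingEnd ℂ (f x) := rfl

/-- `D^α = i^{|α|} ∂^α`, the multi-index derivative of a Schwartz function on `ℝⁿ`. -/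
def Dmulti {n : ℕ} (α : Fin n → ℕ) (f : 𝓢(EuclideanSpace ℝ (Fin n), ℂ)) :
    𝓢(EuclideanSpace ℝ (Fin n), ℂ) :=
  (Complex.I ^ (∑ i, α i)) •
    (List.finRange n).foldr
      (fun i g => (⇑(LineDeriv.lineDerivOpCLM ℝ 𝓢(EuclideanSpace ℝ (Fin n), ℂ) (EuclideanSpace.single i (1:ℝ))))^[α i] g) f

/-- The Sobolev `H^s₂` norm of a Schwartz function:
`‖f‖_s = (∫ (1+|ξ|²)^s |𝓕f(ξ)|² dξ)^{1/2}`. -/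
def sobolevNorm {ι : Type*} [Fintype ι] (s : ℝ)
    (f : 𝓢(EuclideanSpace ℝ ι, ℂ)) : ℝ :=
  (∫ ξ : EuclideanSpace ℝ ι, (1 + ‖ξ‖ ^ 2) ^ s * ‖𝓕 (⇑f) ξ‖ ^ 2) ^ (1/2 : ℝ)

/-- The Bessel-potential `H^γ_p` norm of a Schwartz function:
`‖φ‖_{γ,p} = ‖𝓕⁻¹((1+|ξ|²)^{γ/2} 𝓕φ)‖_{L^p}`. -/
def besselNorm {ι : Type*} [Fintype ι] (γ p : ℝ)
    (φ : 𝓢(EuclideanSpace ℝ ι, ℂ)) : ℝ :=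
  (eLpNorm (𝓕⁻ (fun ξ : EuclideanSpace ℝ ι =>
      ((1 + ‖ξ‖ ^ 2) ^ (γ / 2) : ℝ) • 𝓕 (⇑φ) ξ)) (ENNReal.ofReal p) volume).toReal

end Preamble

/-!
On the Fourier side `D^β` multiplies `𝓕f` by a monomial of degree `|β|`, so for `|β| = m - k`
we have `‖D^β f‖_k ≤ (2π)^{|β|} ‖f‖_m` and `‖D^β f‖_0 ≤ (2π)^{|β|} ‖f‖_{m-k}`. The hypothesis with a
small `ε` therefore bounds the form by `ε‖f‖_m² + C‖f‖_{m-k}‖f‖_{m-l}`. Since `k + l ≥ 1`, one of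
these orders is at most `m - 1`, and the interpolation `a^s ≤ δ a^m + δ^{-s}` (for `a ≥ 1` and
`s + 1 ≤ m`), applied to `a = 1 + |ξ|²`, absorbs the lower-order product into `ε‖f‖_m² + C'‖f‖_0²`.
-/

open LineDeriv

section Fourier

variable {V : Type*} [NormedAddCommGroup V] [InnerProductSpace ℝ V] [FiniteDimensional ℝ V]
  [MeasurableSpace V] [BorelSpace V]
  {F : Type*} [NormedAddCommGroup F] [NormedSpace ℂ F]

theorem SchwartzMap.norm_fourier_lineDerivOp_le (f : 𝓢(V, F)) (v ξ : V) :
    ‖𝓕 ⇑(∂_{v} f : 𝓢(V, F)) ξ‖ ≤ 2 * π * ‖ξ‖ * ‖v‖ * ‖𝓕 ⇑f ξ‖ := by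
  have hv : (inner ℝ · v).HasTemperateGrowth := ((innerSL ℝ).flip v).hasTemperateGrowth
  have h := congrArg (· ξ) (fourier_lineDerivOp_eq f v)
  simp only [smul_apply, smulLeftCLM_apply_apply hv, fourier_coe] at h
  have h2π : ‖2 * (π : ℂ) * I‖ = 2 * π := by simp [abs_of_nonneg pi_nonneg]
  rw [h, norm_smul, norm_smul, h2π, Real.norm_eq_abs, mul_assoc (2 * π) ‖ξ‖, ← mul_assoc]
  gcongr
  exact abs_real_inner_le_norm ξ v

theorem SchwartzMap.norm_fourier_iterate_lineDerivOp_le (f : 𝓢(V, F)) (v ξ : V) (a : ℕ) :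
    ‖𝓕 ⇑((∂_{v} · : 𝓢(V, F) → 𝓢(V, F))^[a] f) ξ‖ ≤ (2 * π * ‖ξ‖ * ‖v‖) ^ a * ‖𝓕 ⇑f ξ‖ := by
  induction a generalizing f with
  | zero => simp
  | succ a ih =>
    rw [Function.iterate_succ_apply]
    calc _ ≤ (2 * π * ‖ξ‖ * ‖v‖) ^ a * ‖𝓕 ⇑(∂_{v} f : 𝓢(V, F)) ξ‖ := ih _
      _ ≤ (2 * π * ‖ξ‖ * ‖v‖) ^ a * (2 * π * ‖ξ‖ * ‖v‖ * ‖𝓕 ⇑f ξ‖) := by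
        gcongr; exact norm_fourier_lineDerivOp_le f v ξ
      _ = _ := by ring

end Fourier

theorem norm_fourier_Dmulti_le {n : ℕ} (α : Fin n → ℕ) (f : 𝓢(EuclideanSpace ℝ (Fin n), ℂ))
    (ξ : EuclideanSpace ℝ (Fin n)) :
    ‖𝓕 ⇑(Dmulti α f) ξ‖ ≤ (2 * π * ‖ξ‖) ^ (∑ i, α i) * ‖𝓕 ⇑f ξ‖ := by
  have hfoldr : ∀ L : List (Fin n), ‖𝓕 ⇑(L.foldr (fun i g =>
      (⇑(lineDerivOpCLM ℝ 𝓢(EuclideanSpace ℝ (Fin n), ℂ)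
        (EuclideanSpace.single i (1 : ℝ))))^[α i] g) f) ξ‖ ≤
        (2 * π * ‖ξ‖) ^ (L.map α).sum * ‖𝓕 ⇑f ξ‖ := by
    intro L
    induction L with
    | nil => simp
    | cons i L ih =>
      simp only [List.foldr_cons, List.map_cons, List.sum_cons, pow_add]
      refine (SchwartzMap.norm_fourier_iterate_lineDerivOp_le _ _ ξ (α i)).trans ?_
      rw [PiLp.norm_single, norm_one, mul_one]
      calc _ ≤ (2 * π * ‖ξ‖) ^ α i * ((2 * π * ‖ξ‖) ^ (L.map α).sum * ‖𝓕 ⇑f ξ‖) := by gcongr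
        _ = _ := by ring
  rw [Dmulti, ← fourier_coe, FourierTransform.fourier_smul, smul_apply, norm_smul, norm_pow,
    norm_I, one_pow, one_mul, fourier_coe, Fin.sum_univ_def]
  exact hfoldr _

theorem SchwartzMap.integrable_one_add_norm_sq_rpow_mul_norm_sq
    {V : Type*} [NormedAddCommGroup V] [InnerProductSpace ℝ V] [FiniteDimensional ℝ V]
    [MeasurableSpace V] [BorelSpace V] {F : Type*} [NormedAddCommGroup F] [NormedSpace ℝ F]
    (s : ℝ) (g : 𝓢(V, F)) :
    Integrable (fun ξ : V => (1 + ‖ξ‖ ^ 2) ^ s * ‖g ξ‖ ^ 2) := by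
  have hw := Function.hasTemperateGrowth_one_add_norm_sq_rpow V (s / 2)
  refine ((smulLeftCLM F (fun ξ : V => (1 + ‖ξ‖ ^ 2) ^ (s / 2)) g).memLp 2).integrable_norm_pow
    two_ne_zero |>.congr (ae_of_all _ fun ξ => ?_)
  have h1 : (0 : ℝ) ≤ 1 + ‖ξ‖ ^ 2 := by positivity
  beta_reduce
  rw [smulLeftCLM_apply_apply hw, norm_smul, mul_pow, Real.norm_of_nonneg (by positivity),
    ← Real.rpow_mul_natCast h1]
  norm_num

section Sobolev

variable {ι : Type*} [Fintype ι]

theorem integrable_sobolev_integrand (s : ℝ) (f : 𝓢(EuclideanSpace ℝ ι, ℂ)) :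
    Integrable (fun ξ : EuclideanSpace ℝ ι => (1 + ‖ξ‖ ^ 2) ^ s * ‖𝓕 ⇑f ξ‖ ^ 2) :=
  (𝓕 f).integrable_one_add_norm_sq_rpow_mul_norm_sq s

theorem sobolevNorm_nonneg (s : ℝ) (f : 𝓢(EuclideanSpace ℝ ι, ℂ)) : 0 ≤ sobolevNorm s f :=
  Real.rpow_nonneg (integral_nonneg fun ξ => by positivity) _

theorem sobolevNorm_sq (s : ℝ) (f : 𝓢(EuclideanSpace ℝ ι, ℂ)) :
    sobolevNorm s f ^ 2 = ∫ ξ : EuclideanSpace ℝ ι, (1 + ‖ξ‖ ^ 2) ^ s * ‖𝓕 ⇑f ξ‖ ^ 2 := by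
  rw [sobolevNorm, ← Real.sqrt_eq_rpow, Real.sq_sqrt (integral_nonneg fun ξ => by positivity)]

theorem sobolevNorm_le_mul_of_forall {s t c : ℝ} (hc : 0 ≤ c) {f g : 𝓢(EuclideanSpace ℝ ι, ℂ)}
    (h : ∀ ξ, (1 + ‖ξ‖ ^ 2) ^ s * ‖𝓕 ⇑f ξ‖ ^ 2 ≤ c ^ 2 * ((1 + ‖ξ‖ ^ 2) ^ t * ‖𝓕 ⇑g ξ‖ ^ 2)) :
    sobolevNorm s f ≤ c * sobolevNorm t g := by
  refine (pow_le_pow_iff_left₀ (sobolevNorm_nonneg s f)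
    (mul_nonneg hc (sobolevNorm_nonneg t g)) two_ne_zero).1 ?_
  rw [mul_pow, sobolevNorm_sq, sobolevNorm_sq, ← integral_const_mul]
  exact integral_mono (integrable_sobolev_integrand s f)
    ((integrable_sobolev_integrand t g).const_mul _) h

theorem sobolevNorm_mono {s t : ℝ} (hst : s ≤ t) (f : 𝓢(EuclideanSpace ℝ ι, ℂ)) :
    sobolevNorm s f ≤ sobolevNorm t f := by
  simpa using sobolevNorm_le_mul_of_forall zero_le_one (f := f) (g := f) fun ξ => by
    rw [one_pow, one_mul]
    gcongr
    exact le_add_of_nonneg_right (by positivity)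

theorem Real.rpow_le_mul_rpow_add_inv_rpow {a s m δ : ℝ} (ha : 1 ≤ a) (hs : 0 ≤ s)
    (hsm : s + 1 ≤ m) (hδ : 0 < δ) : a ^ s ≤ δ * a ^ m + δ⁻¹ ^ s := by
  by_cases hδa : 1 ≤ δ * a
  · calc a ^ s ≤ δ * a * a ^ s := le_mul_of_one_le_left (by positivity) hδa
      _ = δ * a ^ (s + 1) := by rw [Real.rpow_add_one (by positivity)]; ring
      _ ≤ δ * a ^ m := by gcongr
      _ ≤ δ * a ^ m + δ⁻¹ ^ s := le_add_of_nonneg_right (by positivity)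
  · have haδ : a ≤ δ⁻¹ := by
      rw [← mul_one δ⁻¹, le_inv_mul_iff₀ hδ]
      linarith
    calc a ^ s ≤ δ⁻¹ ^ s := Real.rpow_le_rpow (by positivity) haδ hs
      _ ≤ δ * a ^ m + δ⁻¹ ^ s := le_add_of_nonneg_left (by positivity)

theorem sobolevNorm_sq_le_mul_add {s m δ : ℝ} (hs : 0 ≤ s) (hsm : s + 1 ≤ m) (hδ : 0 < δ)
    (f : 𝓢(EuclideanSpace ℝ ι, ℂ)) :
    sobolevNorm s f ^ 2 ≤ δ * sobolevNorm m f ^ 2 + δ⁻¹ ^ s * sobolevNorm 0 f ^ 2 := by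
  rw [sobolevNorm_sq, sobolevNorm_sq, sobolevNorm_sq, ← integral_const_mul, ← integral_const_mul,
    ← integral_add ((integrable_sobolev_integrand m f).const_mul _)
      ((integrable_sobolev_integrand 0 f).const_mul _)]
  refine integral_mono (integrable_sobolev_integrand s f)
    (((integrable_sobolev_integrand m f).const_mul _).add
      ((integrable_sobolev_integrand 0 f).const_mul _)) fun ξ => ?_
  have h := Real.rpow_le_mul_rpow_add_inv_rpow (le_add_of_nonneg_right (sq_nonneg ‖ξ‖)) hs hsm hδ
  simp only [Real.rpow_zero, one_mul]
  nlinarith [sq_nonneg ‖𝓕 ⇑f ξ‖]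

theorem exists_sobolevNorm_mul_le {s t m ε : ℝ} (hs : 0 ≤ s) (ht : 0 ≤ t) (hsm : s ≤ m)
    (htm : t ≤ m) (hst : s + 1 ≤ m ∨ t + 1 ≤ m) (hε : 0 < ε) :
    ∃ C, 0 ≤ C ∧ ∀ f : 𝓢(EuclideanSpace ℝ ι, ℂ),
      sobolevNorm s f * sobolevNorm t f ≤ ε * sobolevNorm m f ^ 2 + C * sobolevNorm 0 f ^ 2 := by
  wlog hs1 : s + 1 ≤ m generalizing s t with H
  · obtain ⟨C, hC, hCf⟩ := H ht hs htm hsm hst.symm (hst.resolve_left hs1)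
    exact ⟨C, hC, fun f => (mul_comm _ _).trans_le (hCf f)⟩
  -- `2εxy ≤ ε²y² + x²`, then interpolate `x² = ‖f‖_s²` with `δ = ε²`
  refine ⟨(ε ^ 2)⁻¹ ^ s / (2 * ε), by positivity, fun f => ?_⟩
  have hx := sobolevNorm_nonneg s f
  have hxy : sobolevNorm s f * sobolevNorm t f ≤ sobolevNorm s f * sobolevNorm m f :=
    mul_le_mul_of_nonneg_left (sobolevNorm_mono htm f) hx
  have hx2 := sobolevNorm_sq_le_mul_add hs hs1 (pow_pos hε 2) f
  have hC : 2 * ε * ((ε ^ 2)⁻¹ ^ s / (2 * ε)) = (ε ^ 2)⁻¹ ^ s := by field_simp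
  refine hxy.trans (le_of_mul_le_mul_left ?_ (by positivity : 0 < 2 * ε))
  nlinarith [sq_nonneg (ε * sobolevNorm m f - sobolevNorm s f)]

end Sobolev

theorem sobolevNorm_Dmulti_le {n : ℕ} (α : Fin n → ℕ) {s t : ℝ}
    (hst : s + ((∑ i, α i : ℕ) : ℝ) = t) (f : 𝓢(EuclideanSpace ℝ (Fin n), ℂ)) :
    sobolevNorm s (Dmulti α f) ≤ (2 * π) ^ (∑ i, α i) * sobolevNorm t f := by
  refine sobolevNorm_le_mul_of_forall (by positivity) fun ξ => ?_
  have h1 : (0 : ℝ) < 1 + ‖ξ‖ ^ 2 := by positivity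
  rw [← hst, Real.rpow_add_natCast h1.ne']
  calc (1 + ‖ξ‖ ^ 2) ^ s * ‖𝓕 ⇑(Dmulti α f) ξ‖ ^ 2
      ≤ (1 + ‖ξ‖ ^ 2) ^ s * ((2 * π * ‖ξ‖) ^ (∑ i, α i) * ‖𝓕 ⇑f ξ‖) ^ 2 := by
        gcongr; exact norm_fourier_Dmulti_le α f ξ
    _ = ((2 * π) ^ (∑ i, α i)) ^ 2 *
          ((1 + ‖ξ‖ ^ 2) ^ s * (‖ξ‖ ^ 2) ^ (∑ i, α i) * ‖𝓕 ⇑f ξ‖ ^ 2) := by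
        ring
    _ ≤ _ := by
        gcongr
        exact le_add_of_nonneg_left zero_le_one

theorem norm_map_smul2_Dmulti_le {n m k l : ℕ} (hk : k ≤ m) (hl : l ≤ m)
    (φ : 𝓢(EuclideanSpace ℝ (Fin n), ℂ) → ℂ) {δ Cδ : ℝ} (hδ : 0 ≤ δ) (hCδ : 0 ≤ Cδ)
    (hφ : ∀ u v : 𝓢(EuclideanSpace ℝ (Fin n), ℂ),
      ‖φ (smul2 u (conjS v))‖ ≤ δ * sobolevNorm (k : ℝ) u * sobolevNorm (l : ℝ) v +
        Cδ * sobolevNorm 0 u * sobolevNorm 0 v)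
    {β α : Fin n → ℕ} (hβ : ∑ i, β i = m - k) (hα : ∑ i, α i = m - l)
    (f : 𝓢(EuclideanSpace ℝ (Fin n), ℂ)) :
    ‖φ (smul2 (Dmulti β f) (conjS (Dmulti α f)))‖ ≤ (2 * π) ^ (m - k) * (2 * π) ^ (m - l) *
      (δ * sobolevNorm m f ^ 2 +
        Cδ * (sobolevNorm (m - k : ℕ) f * sobolevNorm (m - l : ℕ) f)) := by
  have hβk : sobolevNorm k (Dmulti β f) ≤ (2 * π) ^ (m - k) * sobolevNorm m f := by
    simpa only [hβ] using sobolevNorm_Dmulti_le β (by rw [hβ, Nat.cast_sub hk]; ring) f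
  have hαl : sobolevNorm l (Dmulti α f) ≤ (2 * π) ^ (m - l) * sobolevNorm m f := by
    simpa only [hα] using sobolevNorm_Dmulti_le α (by rw [hα, Nat.cast_sub hl]; ring) f
  have hβ0 : sobolevNorm 0 (Dmulti β f) ≤ (2 * π) ^ (m - k) * sobolevNorm (m - k : ℕ) f := by
    simpa only [hβ] using sobolevNorm_Dmulti_le β (by rw [hβ, zero_add]) f
  have hα0 : sobolevNorm 0 (Dmulti α f) ≤ (2 * π) ^ (m - l) * sobolevNorm (m - l : ℕ) f := by
    simpa only [hα] using sobolevNorm_Dmulti_le α (by rw [hα, zero_add]) f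
  calc _ ≤ δ * sobolevNorm k (Dmulti β f) * sobolevNorm l (Dmulti α f) +
          Cδ * sobolevNorm 0 (Dmulti β f) * sobolevNorm 0 (Dmulti α f) := hφ _ _
    _ ≤ δ * ((2 * π) ^ (m - k) * sobolevNorm m f) * ((2 * π) ^ (m - l) * sobolevNorm m f) +
          Cδ * ((2 * π) ^ (m - k) * sobolevNorm (m - k : ℕ) f) *
            ((2 * π) ^ (m - l) * sobolevNorm (m - l : ℕ) f) := by
        gcongr <;> first
          | exact sobolevNorm_nonneg _ _
          | exact mul_nonneg hδ (mul_nonneg (by positivity) (sobolevNorm_nonneg _ _))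
          | exact mul_nonneg hCδ (mul_nonneg (by positivity) (sobolevNorm_nonneg _ _))
    _ = _ := by ring

theorem multiplier_quadratic_form_subordinate_general {n m : ℕ}
    {k l : ℕ} (hk : k ≤ m) (hl : l ≤ m) (hkl : 1 ≤ k + l)
    (φ : 𝓢(EuclideanSpace ℝ (Fin n), ℂ) →L[ℂ] ℂ)
    (h : ∀ ε : ℝ, 0 < ε → ∃ Cε : ℝ, 0 ≤ Cε ∧
      ∀ u v : 𝓢(EuclideanSpace ℝ (Fin n), ℂ),
        ‖φ (smul2 u (conjS v))‖ ≤ ε * sobolevNorm (k : ℝ) u * sobolevNorm (l : ℝ) v +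
          Cε * sobolevNorm 0 u * sobolevNorm 0 v) :
    ∀ β α : Fin n → ℕ, (∑ i, β i) = m - k → (∑ i, α i) = m - l →
      ∀ ε : ℝ, 0 < ε → ∃ C' : ℝ, 0 ≤ C' ∧
        ∀ f : 𝓢(EuclideanSpace ℝ (Fin n), ℂ),
          ‖φ (smul2 (Dmulti β f) (conjS (Dmulti α f)))‖ ≤
            ε * sobolevNorm (m : ℝ) f ^ 2 + C' * sobolevNorm 0 f ^ 2 := by
  intro β α hβ hα ε hε
  set A := (2 * π) ^ (m - k) * (2 * π) ^ (m - l)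
  have hA : 0 < A := by positivity
  obtain ⟨Cδ, hCδ, hφ⟩ := h (ε / (2 * A)) (by positivity)
  have hlow : ((m - k : ℕ) : ℝ) + 1 ≤ m ∨ ((m - l : ℕ) : ℝ) + 1 ≤ m := by
    have : m - k + 1 ≤ m ∨ m - l + 1 ≤ m := by omega
    exact_mod_cast this
  set η := ε / (2 * (A * Cδ + 1))
  obtain ⟨C, hC, hinterp⟩ := exists_sobolevNorm_mul_le (ι := Fin n) (by positivity)
    (by positivity) (by exact_mod_cast Nat.sub_le m k) (by exact_mod_cast Nat.sub_le m l) hlow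
    (by positivity : 0 < η)
  refine ⟨A * Cδ * C, by positivity, fun f => ?_⟩
  have hAδ : A * (ε / (2 * A)) = ε / 2 := by field_simp
  have hAη : A * Cδ * η ≤ ε / 2 := by
    rw [mul_div_assoc', div_le_div_iff₀ (by positivity) two_pos]
    nlinarith
  calc _ ≤ A * (ε / (2 * A) * sobolevNorm m f ^ 2 +
          Cδ * (sobolevNorm (m - k : ℕ) f * sobolevNorm (m - l : ℕ) f)) :=
        norm_map_smul2_Dmulti_le hk hl φ (by positivity) hCδ hφ hβ hα f
    _ ≤ A * (ε / (2 * A) * sobolevNorm m f ^ 2 +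
          Cδ * (η * sobolevNorm m f ^ 2 + C * sobolevNorm 0 f ^ 2)) := by
        gcongr; exact hinterp f
    _ ≤ _ := by nlinarith [sq_nonneg (sobolevNorm m f)]

/-- If `φ ∈ M₀[k,-l]`, the form `(φ D^{m-k}f, D^{m-l}f)` is subordinate to
`(∇^m f, ∇^m f)` with arbitrarily small relative bound. -/
theorem multiplier_quadratic_form_subordinate {n m : ℕ} (hn : 1 ≤ n) (hm : 1 ≤ m)
    {k l : ℕ} (hk : k ≤ m) (hl : l ≤ m) (hkl : 1 ≤ k + l)
    (φ : 𝓢(EuclideanSpace ℝ (Fin n), ℂ) →L[ℂ] ℂ)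
    (h : ∀ ε : ℝ, 0 < ε → ∃ Cε : ℝ, 0 ≤ Cε ∧
      ∀ u v : 𝓢(EuclideanSpace ℝ (Fin n), ℂ),
        ‖φ (smul2 u (conjS v))‖ ≤ ε * sobolevNorm (k : ℝ) u * sobolevNorm (l : ℝ) v +
          Cε * sobolevNorm 0 u * sobolevNorm 0 v) :
    ∀ β α : Fin n → ℕ, (∑ i, β i) = m - k → (∑ i, α i) = m - l →
      ∀ ε : ℝ, 0 < ε → ∃ C' : ℝ, 0 ≤ C' ∧
        ∀ f : 𝓢(EuclideanSpace ℝ (Fin n), ℂ),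
          ‖φ (smul2 (Dmulti β f) (conjS (Dmulti α f)))‖ ≤
            ε * sobolevNorm (m : ℝ) f ^ 2 + C' * sobolevNorm 0 f ^ 2 :=
  multiplier_quadratic_form_subordinate_general hk hl hkl φ h
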